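/- Second IPW representation of the front-door functional (T = 0, discrete case): Σ_{ℓ, m} p(m | ℓ, a) [Σ_{a'} E[Y | ℓ, a', m] p(a' | ℓ)] p(ℓ) = E[ (p(M | L, a) / p(M | L, A)) · E[Y | L, A, M] ]. -/
import Mathlib


attribute [local instance] Classical.propDecidable

noncomputable section

/-- Probability of an event under pmf `w` on a finite sample space. -/
def Pr {Ω : Type} [Fintype Ω] (w : Ω → ℝ) (E : Ω → Prop) : ℝ :=
  ∑ ω, if E ω then w ω else 0

/-- Conditional probability `P(E | F)`. -/
def cPr {Ω : Type} [Fintype Ω] (w : Ω → ℝ) (E F : Ω → Prop) : ℝ :=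
  Pr w (fun ω => E ω ∧ F ω) / Pr w F

/-- Expectation of a real random variable. -/
def Exp {Ω : Type} [Fintype Ω] (w : Ω → ℝ) (Y : Ω → ℝ) : ℝ :=
  ∑ ω, Y ω * w ω

/-- Conditional expectation `E[Y | F]`. -/
def cExp {Ω : Type} [Fintype Ω] (w : Ω → ℝ) (Y : Ω → ℝ) (F : Ω → Prop) : ℝ :=
  (∑ ω, if F ω then Y ω * w ω else 0) / Pr w F

lemma Pr_nonneg {Ω : Type} [Fintype Ω] (w : Ω → ℝ) (hw : ∀ ω, 0 ≤ w ω)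
    (E : Ω → Prop) : 0 ≤ Pr w E :=
  Finset.sum_nonneg fun ω _ => by by_cases h : E ω <;> simp [h, hw ω]

lemma Pr_mono {Ω : Type} [Fintype Ω] (w : Ω → ℝ) (hw : ∀ ω, 0 ≤ w ω)
    (E F : Ω → Prop) (h : ∀ ω, E ω → F ω) : Pr w E ≤ Pr w F :=
  Finset.sum_le_sum fun ω _ => by
    by_cases hE : E ω
    · simp [hE, h ω hE]
    · by_cases hF : F ω <;> simp [hE, hF, hw ω]

lemma Pr_congr {Ω : Type} [Fintype Ω] (w : Ω → ℝ)
    (E F : Ω → Prop) (h : ∀ ω, E ω ↔ F ω) : Pr w E = Pr w F := by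
  unfold Pr; exact Finset.sum_congr rfl fun ω _ => by rw [h ω]

/-- Expectation of a function of `(L, A, M)` as a sum over value triples. -/
lemma exp_comp {Ω 𝓛 𝓐 𝓜 : Type} [Fintype Ω] [Fintype 𝓛] [Fintype 𝓐] [Fintype 𝓜]
    (L : Ω → 𝓛) (A : Ω → 𝓐) (M : Ω → 𝓜) (F : 𝓛 → 𝓐 → 𝓜 → ℝ) (w : Ω → ℝ) :
    Exp w (fun ω => F (L ω) (A ω) (M ω))
      = ∑ ℓ : 𝓛, ∑ a' : 𝓐, ∑ m : 𝓜,
          F ℓ a' m * Pr w (fun ω => L ω = ℓ ∧ A ω = a' ∧ M ω = m) := by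
  unfold Exp Pr
  simp_rw [Finset.mul_sum, mul_ite, mul_zero]
  conv_rhs => enter [2, ℓ, 2, a']; rw [Finset.sum_comm]
  conv_rhs => enter [2, ℓ]; rw [Finset.sum_comm]
  conv_rhs => rw [Finset.sum_comm]
  refine Finset.sum_congr rfl fun ω _ => Eq.symm ?_
  simp [ite_and, Finset.sum_ite_eq]

/-- second IPW representation of the front-door functional (T = 0). -/
theorem frontdoor_ipw_two
    {Ω 𝓛 𝓐 𝓜 : Type} [Fintype Ω] [Fintype 𝓛] [Fintype 𝓐] [Fintype 𝓜]
    (w : Ω → ℝ) (hw : ∀ ω, 0 ≤ w ω) (hw1 : ∑ ω, w ω = 1)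
    (L : Ω → 𝓛) (A : Ω → 𝓐) (M : Ω → 𝓜) (Y : Ω → ℝ) (a : 𝓐)
    -- positivity: p(m | ℓ, a'') > 0 whenever p(ℓ) p(a'' | ℓ) > 0
    (hpos : ∀ (ℓ : 𝓛) (a'' : 𝓐) (m : 𝓜),
      0 < Pr w (fun ω => L ω = ℓ) * cPr w (fun ω => A ω = a'') (fun ω => L ω = ℓ) →
      0 < cPr w (fun ω => M ω = m) (fun ω => L ω = ℓ ∧ A ω = a'')) :
    (∑ ℓ : 𝓛, ∑ m : 𝓜,
        cPr w (fun ω => M ω = m) (fun ω => L ω = ℓ ∧ A ω = a)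
          * (∑ a' : 𝓐,
              cExp w Y (fun ω => L ω = ℓ ∧ A ω = a' ∧ M ω = m)
                * cPr w (fun ω => A ω = a') (fun ω => L ω = ℓ))
          * Pr w (fun ω => L ω = ℓ))
      = Exp w (fun ω =>
          cPr w (fun ω' => M ω' = M ω) (fun ω' => L ω' = L ω ∧ A ω' = a)
              / cPr w (fun ω' => M ω' = M ω) (fun ω' => L ω' = L ω ∧ A ω' = A ω)
            * cExp w Y (fun ω' => L ω' = L ω ∧ A ω' = A ω ∧ M ω' = M ω)) := by
  classical
  have hexp := exp_comp L A M (fun ℓ a' m =>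
    cPr w (fun ω' => M ω' = m) (fun ω' => L ω' = ℓ ∧ A ω' = a)
      / cPr w (fun ω' => M ω' = m) (fun ω' => L ω' = ℓ ∧ A ω' = a')
      * cExp w Y (fun ω' => L ω' = ℓ ∧ A ω' = a' ∧ M ω' = m)) w
  rw [show Exp w (fun ω =>
          cPr w (fun ω' => M ω' = M ω) (fun ω' => L ω' = L ω ∧ A ω' = a)
              / cPr w (fun ω' => M ω' = M ω) (fun ω' => L ω' = L ω ∧ A ω' = A ω)
            * cExp w Y (fun ω' => L ω' = L ω ∧ A ω' = A ω ∧ M ω' = M ω))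
      = ∑ ℓ : 𝓛, ∑ a' : 𝓐, ∑ m : 𝓜,
          (cPr w (fun ω' => M ω' = m) (fun ω' => L ω' = ℓ ∧ A ω' = a)
            / cPr w (fun ω' => M ω' = m) (fun ω' => L ω' = ℓ ∧ A ω' = a')
            * cExp w Y (fun ω' => L ω' = ℓ ∧ A ω' = a' ∧ M ω' = m))
          * Pr w (fun ω => L ω = ℓ ∧ A ω = a' ∧ M ω = m) from hexp]
  -- reorder RHS inner sums: a' ↔ m
  conv_rhs => enter [2, ℓ]; rw [Finset.sum_comm]
  -- expand the LHS products over the sum on a'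
  have hl : ∀ (ℓ : 𝓛) (m : 𝓜),
      cPr w (fun ω => M ω = m) (fun ω => L ω = ℓ ∧ A ω = a)
        * (∑ a' : 𝓐, cExp w Y (fun ω => L ω = ℓ ∧ A ω = a' ∧ M ω = m)
            * cPr w (fun ω => A ω = a') (fun ω => L ω = ℓ))
        * Pr w (fun ω => L ω = ℓ)
      = ∑ a' : 𝓐,
          cPr w (fun ω => M ω = m) (fun ω => L ω = ℓ ∧ A ω = a)
            * (cExp w Y (fun ω => L ω = ℓ ∧ A ω = a' ∧ M ω = m)
              * cPr w (fun ω => A ω = a') (fun ω => L ω = ℓ))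
            * Pr w (fun ω => L ω = ℓ) := by
    intro ℓ m
    rw [Finset.mul_sum, Finset.sum_mul]
  simp_rw [hl]
  refine Finset.sum_congr rfl fun ℓ _ => Finset.sum_congr rfl fun m _ =>
    Finset.sum_congr rfl fun a' _ => ?_
  -- per-triple identity
  have hPA : cPr w (fun ω => A ω = a') (fun ω => L ω = ℓ)
      = Pr w (fun ω => L ω = ℓ ∧ A ω = a') / Pr w (fun ω => L ω = ℓ) := by
    rw [cPr]
    congr 1
    exact Pr_congr w _ _ fun ω => and_comm
  have hr : cPr w (fun ω => M ω = m) (fun ω => L ω = ℓ ∧ A ω = a')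
      = Pr w (fun ω => L ω = ℓ ∧ A ω = a' ∧ M ω = m)
        / Pr w (fun ω => L ω = ℓ ∧ A ω = a') := by
    rw [cPr]
    congr 1
    exact Pr_congr w _ _ fun ω => by tauto
  by_cases hP2 : Pr w (fun ω => L ω = ℓ ∧ A ω = a') = 0
  · have hP3 : Pr w (fun ω => L ω = ℓ ∧ A ω = a' ∧ M ω = m) = 0 :=
      le_antisymm (by
        calc Pr w (fun ω => L ω = ℓ ∧ A ω = a' ∧ M ω = m)
            ≤ Pr w (fun ω => L ω = ℓ ∧ A ω = a') :=
              Pr_mono w hw _ _ fun ω h => ⟨h.1, h.2.1⟩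
          _ = 0 := hP2) (Pr_nonneg w hw _)
    rw [hPA, hr, hP2, hP3]
    simp
  · have h2 : 0 < Pr w (fun ω => L ω = ℓ ∧ A ω = a') :=
      lt_of_le_of_ne (Pr_nonneg w hw _) (Ne.symm hP2)
    have hℓ : 0 < Pr w (fun ω => L ω = ℓ) :=
      lt_of_lt_of_le h2 (Pr_mono w hw _ _ fun ω h => h.1)
    have hA : 0 < cPr w (fun ω => A ω = a') (fun ω => L ω = ℓ) := by
      rw [hPA]; exact div_pos h2 hℓ
    have hrpos := hpos ℓ a' m (mul_pos hℓ hA)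
    rw [hr] at hrpos
    have h3 : 0 < Pr w (fun ω => L ω = ℓ ∧ A ω = a' ∧ M ω = m) := by
      have := mul_pos hrpos h2
      rwa [div_mul_cancel₀ _ (ne_of_gt h2)] at this
    have h3' : Pr w (fun ω => L ω = ℓ ∧ A ω = a' ∧ M ω = m) ≠ 0 := ne_of_gt h3
    have hℓ' : Pr w (fun ω => L ω = ℓ) ≠ 0 := ne_of_gt hℓ
    rw [hPA, hr]
    field_simp
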